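/- Let V be a regular potential and let ψ be the solution of the gradient flow dψ_t = -V'(ψ_t)dt with ψ_0 = x₀ ∈ ℝ \ {0}. Fix γ ∈ (0,1) and set δ_ε := ε^γ, t_ε := (1/(2V''(0)))(ln(1/ε) + ln(2V''(0))), and for b ∈ ℝ set t_ε(b) := t_ε + b/V''(0) and t*_ε(b) := t_ε(b) + b δ_ε. Then for every b ∈ ℝ the limit lim_{ε→0} (sup_{t between t_ε(b) and t*_ε(b)} |ψ_t|)/√ε exists and is a finite strictly positive real number ρ(b). -/

import Mathlib

open Filter Set Real Asymptotics Topology MeasureTheory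

/-!
Write `f = V'` and `a = V''(0)`. Taylor's theorem gives `f x = a x + O(x²)`; as `f` vanishes only
at `0`, this forces `x f(x) > 0` for `x ≠ 0`. By uniqueness of solutions the flow never reaches the
equilibrium `0`, so after a reflection `u = |ψ|` is a positive decreasing solution of `u' = -g(u)`
for a nonlinearity `g` of the same kind. Then `u → 0`, so `u' ≤ -(a/2) u` eventually and `u` decays
like `e^{-at/2}`; hence `(log u + a t)' = -(g(u) - a u)/u = O(u)` is integrable and
`|ψ t| e^{at} → ρ₀ > 0`. Since `|ψ|` is decreasing, the supremum over the window is `|ψ|` at its left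
end `t_ε(b) + min(0, b δ_ε)`, and `e^{-a t_ε(b)} = √ε e^{-b} / √(2a)` gives
`ρ(b) = ρ₀ e^{-b} / √(2a)`.
-/

theorem ContDiff.isBigO_sub_sub_deriv_mul {f : ℝ → ℝ} (hf : ContDiff ℝ 2 f) (x₀ : ℝ) :
    (fun x => f x - f x₀ - deriv f x₀ * (x - x₀)) =O[𝓝 x₀] fun x => (x - x₀) ^ 2 := by
  have hsecond : (fun x => (x - x₀) ^ 2 / 2 * iteratedDeriv 2 f x₀) =O[𝓝 x₀]
      fun x => (x - x₀) ^ 2 :=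
    (isBigO_refl _ _).const_mul_left (iteratedDeriv 2 f x₀ / 2) |>.congr_left fun x => by ring
  refine ((taylor_isLittleO_univ hf).isBigO.add hsecond).congr_left fun x => ?_
  simp [taylorWithinEval_succ, iteratedDerivWithin_univ, iteratedDeriv_one]
  ring

theorem IsPreconnected.pos_of_ne_zero {α : Type*} [TopologicalSpace α] {s : Set α} {g : α → ℝ}
    {y : α} (hs : IsPreconnected s) (hg : ContinuousOn g s) (hg0 : ∀ x ∈ s, g x ≠ 0)
    (hy : y ∈ s) (hgy : 0 < g y) : ∀ x ∈ s, 0 < g x := by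
  intro x hx
  by_contra! hgx
  obtain ⟨z, hz, hgz⟩ := hs.intermediate_value hx hy hg ⟨hgx, hgy.le⟩
  exact hg0 z hz hgz

theorem eventually_pos_mul_of_isLittleO {f : ℝ → ℝ} {a : ℝ} (ha : 0 < a)
    (hf : (fun x => f x - a * x) =o[𝓝 0] fun x => x) : ∀ᶠ x in 𝓝[≠] 0, 0 < x * f x := by
  filter_upwards [nhdsWithin_le_nhds (hf.def (half_pos ha)), self_mem_nhdsWithin]
    with x hx (hx0 : x ≠ 0)
  rw [norm_eq_abs, norm_eq_abs] at hx
  have hcross : -(|x| * |f x - a * x|) ≤ x * (f x - a * x) := by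
    rw [← abs_mul]
    exact neg_abs_le _
  nlinarith [mul_le_mul_of_nonneg_left hx (abs_nonneg x), abs_mul_abs_self x, sq_pos_of_ne_zero hx0]

theorem mul_apply_pos_of_ne_zero {f : ℝ → ℝ} (hf : Continuous f) (hzero : ∀ x, f x = 0 → x = 0)
    (hloc : ∀ᶠ x in 𝓝[≠] 0, 0 < x * f x) {x : ℝ} (hx : x ≠ 0) : 0 < x * f x := by
  have hg : Continuous fun x => x * f x := continuous_id.mul hf
  have hg0 : ∀ x ≠ 0, x * f x ≠ 0 := fun x hx h => hx (hzero x ((mul_eq_zero.1 h).resolve_left hx))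
  rcases hx.lt_or_gt with hneg | hpos
  · obtain ⟨y, hy, hy0⟩ := ((hloc.filter_mono (nhdsLT_le_nhdsNE 0)).and self_mem_nhdsWithin).exists
    exact isPreconnected_Iio.pos_of_ne_zero hg.continuousOn (fun z hz => hg0 z (ne_of_lt hz))
      hy0 hy x hneg
  · obtain ⟨y, hy, hy0⟩ := ((hloc.filter_mono (nhdsGT_le_nhdsNE 0)).and self_mem_nhdsWithin).exists
    exact isPreconnected_Ioi.pos_of_ne_zero hg.continuousOn (fun z hz => hg0 z (ne_of_gt hz))
      hy0 hy x hpos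

theorem isBigO_reflect_sub_mul {f : ℝ → ℝ} {a σ : ℝ} (hσ : σ * σ = 1)
    (hf : (fun x => f x - a * x) =O[𝓝 0] fun x => x ^ 2) :
    (fun x => σ * f (σ * x) - a * x) =O[𝓝 0] fun x => x ^ 2 := by
  have hσx : Tendsto (fun x => σ * x) (𝓝 0) (𝓝 0) := by
    simpa using (tendsto_id (x := 𝓝 (0 : ℝ))).const_mul σ
  refine ((hf.comp_tendsto hσx).const_mul_left σ).congr (fun x => ?_) (fun x => ?_)
  · simp only [Function.comp_apply]
    linear_combination (-(a * x)) * hσ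
  · simp only [Function.comp_apply]
    linear_combination x ^ 2 * hσ

theorem antitoneOn_Ici_of_hasDerivAt_nonpos {g g' : ℝ → ℝ} {T : ℝ}
    (hg : ∀ t ≥ T, HasDerivAt g (g' t) t) (hg' : ∀ t > T, g' t ≤ 0) : AntitoneOn g (Ici T) :=
  antitoneOn_of_hasDerivWithinAt_nonpos (convex_Ici T)
    (fun t ht => (hg t ht).continuousAt.continuousWithinAt)
    (by simp only [interior_Ici]; exact fun t ht => (hg t (le_of_lt ht)).hasDerivWithinAt)
    (by simp only [interior_Ici]; exact hg')

theorem isBigO_exp_of_hasDerivAt_le {u u' : ℝ → ℝ} {c : ℝ}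
    (hu : ∀ᶠ t in atTop, HasDerivAt u (u' t) t ∧ u' t ≤ -c * u t ∧ 0 ≤ u t) :
    u =O[atTop] fun t => exp (-c * t) := by
  obtain ⟨T, hT⟩ := eventually_atTop.1 hu
  have hanti : AntitoneOn (fun t => u t * exp (c * t)) (Ici T) := by
    refine antitoneOn_Ici_of_hasDerivAt_nonpos
      (fun t ht => (hT t ht).1.mul ((hasDerivAt_id t).const_mul c).exp) fun t ht => ?_
    have hexp := exp_pos (c * t)
    simp only [id, mul_one]
    nlinarith [mul_le_mul_of_nonneg_right (hT t ht.le).2.1 hexp.le]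
  refine IsBigO.of_bound (u T * exp (c * T)) (eventually_atTop.2 ⟨T, fun t ht => ?_⟩)
  rw [norm_of_nonneg (hT t ht).2.2, norm_of_nonneg (exp_pos _).le]
  calc u t = u t * exp (c * t) * exp (-c * t) := by rw [mul_assoc, ← exp_add]; ring_nf; simp
    _ ≤ u T * exp (c * T) * exp (-c * t) :=
      mul_le_mul_of_nonneg_right (hanti self_mem_Ici ht ht) (exp_pos _).le

theorem ODE_solution_ne_equilibrium {v u : ℝ → ℝ} {p : ℝ} (hv : LocallyLipschitz v)
    (hvp : v p = 0) (hu : ∀ t ≥ 0, HasDerivAt u (v (u t)) t) (hu0 : u 0 ≠ p) :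
    ∀ t ≥ 0, u t ≠ p := by
  intro t ht hut
  have hcont : ContinuousOn u (Icc 0 t) := fun s hs => (hu s hs.1).continuousAt.continuousWithinAt
  obtain ⟨K, hK⟩ := hv.locallyLipschitzOn.exists_lipschitzOnWith_of_compact
    (isCompact_Icc.image_of_continuousOn hcont)
  have hconst := ODE_solution_unique_of_mem_Icc_left (v := fun _ => v) (g := fun _ => p)
    (fun _ _ => hK) hcont (fun s hs => (hu s hs.1.le).hasDerivWithinAt)
    (fun s hs => mem_image_of_mem u (Ioc_subset_Icc_self hs)) continuousOn_const
    (fun s _ => by simpa [hvp] using hasDerivWithinAt_const s (Iic s) p)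
    (fun _ _ => ⟨t, right_mem_Icc.2 ht, hut⟩) hut
  exact hu0 (hconst (left_mem_Icc.2 ht))

section Flow

variable {f u : ℝ → ℝ}

theorem flow_pos (hf : ContDiff ℝ 1 f) (hf0 : f 0 = 0) (hu : ∀ t ≥ 0, HasDerivAt u (-f (u t)) t)
    (hu0 : 0 < u 0) : ∀ t ≥ 0, 0 < u t :=
  isPreconnected_Ici.pos_of_ne_zero (fun t ht => (hu t ht).continuousAt.continuousWithinAt)
    (ODE_solution_ne_equilibrium (v := fun x => -f x) hf.neg.locallyLipschitz (by simp [hf0]) hu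
      hu0.ne')
    self_mem_Ici hu0

theorem flow_antitoneOn (hf_pos : ∀ x > 0, 0 < f x) (hu : ∀ t ≥ 0, HasDerivAt u (-f (u t)) t)
    (hu_pos : ∀ t ≥ 0, 0 < u t) : AntitoneOn u (Ici 0) :=
  antitoneOn_Ici_of_hasDerivAt_nonpos hu fun t ht => (neg_neg_of_pos (hf_pos _ (hu_pos t ht.le))).le

theorem flow_tendsto_zero (hf : Continuous f) (hf_pos : ∀ x > 0, 0 < f x)
    (hu : ∀ t ≥ 0, HasDerivAt u (-f (u t)) t) (hu_pos : ∀ t ≥ 0, 0 < u t) :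
    Tendsto u atTop (𝓝 0) := by
  have hanti := flow_antitoneOn hf_pos hu hu_pos
  suffices h : ∀ η > 0, ∃ T ≥ 0, u T < η by
    refine tendsto_order.2 ⟨fun c hc => eventually_atTop.2 ⟨0, fun t ht => hc.trans (hu_pos t ht)⟩,
      fun η hη => ?_⟩
    obtain ⟨T, hT, huT⟩ := h η hη
    exact eventually_atTop.2 ⟨T, fun t ht => (hanti hT (hT.trans ht) ht).trans_lt huT⟩
  intro η hη
  by_contra! hlow
  obtain ⟨z, hz, hmin⟩ := isCompact_Icc.exists_isMinOn (nonempty_Icc.2 (hlow 0 le_rfl))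
    hf.continuousOn
  -- while `u ≥ η`, the speed `f (u t)` stays above its minimum `f z > 0` on `[η, u 0]`
  have hdec : AntitoneOn (fun t => u t + f z * t) (Ici 0) := by
    refine antitoneOn_Ici_of_hasDerivAt_nonpos
      (fun t ht => (hu t ht).add ((hasDerivAt_id t).const_mul (f z))) fun t ht => ?_
    have := isMinOn_iff.1 hmin (u t) ⟨hlow t ht.le, hanti self_mem_Ici (le_of_lt ht) ht.le⟩
    simp only [mul_one]
    linarith
  have hfz : 0 < f z := hf_pos z (hη.trans_le hz.1)
  have hT : 0 ≤ u 0 / f z := div_nonneg (hu_pos 0 le_rfl).le hfz.le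
  have := hdec self_mem_Ici hT hT
  simp only [mul_zero, add_zero, mul_div_cancel₀ _ hfz.ne'] at this
  linarith [hlow _ hT]

variable {a : ℝ}

theorem flow_isBigO_exp (hf : Continuous f) (hf_pos : ∀ x > 0, 0 < f x) (ha : 0 < a)
    (hquad : (fun x => f x - a * x) =O[𝓝 0] fun x => x ^ 2)
    (hu : ∀ t ≥ 0, HasDerivAt u (-f (u t)) t) (hu_pos : ∀ t ≥ 0, 0 < u t) :
    u =O[atTop] fun t => exp (-(a / 2) * t) := by
  have hlim := flow_tendsto_zero hf hf_pos hu hu_pos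
  have hsmall := ((hquad.comp_tendsto hlim).trans_isLittleO
    ((isLittleO_pow_id one_lt_two).comp_tendsto hlim)).def (half_pos ha)
  refine isBigO_exp_of_hasDerivAt_le (u' := fun t => -f (u t)) ?_
  filter_upwards [hsmall, eventually_ge_atTop 0] with t hsmall ht
  refine ⟨hu t ht, ?_, (hu_pos t ht).le⟩
  rw [Function.comp_apply, Function.comp_apply, norm_eq_abs, norm_of_nonneg (hu_pos t ht).le]
    at hsmall
  linarith [(abs_le.1 hsmall).1]

theorem flow_mul_exp_tendsto (hf : Continuous f) (hf_pos : ∀ x > 0, 0 < f x) (ha : 0 < a)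
    (hquad : (fun x => f x - a * x) =O[𝓝 0] fun x => x ^ 2)
    (hu : ∀ t ≥ 0, HasDerivAt u (-f (u t)) t) (hu_pos : ∀ t ≥ 0, 0 < u t) :
    ∃ ρ > 0, Tendsto (fun t => u t * exp (a * t)) atTop (𝓝 ρ) := by
  set F' : ℝ → ℝ := fun t => -(f (u t) - a * u t) / u t with hF'
  have hF : ∀ t ≥ 0, HasDerivAt (fun t => log (u t) + a * t) (F' t) t := by
    intro t ht
    refine (((hu t ht).log (hu_pos t ht).ne').add ((hasDerivAt_id t).const_mul a)).congr_deriv ?_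
    rw [hF']
    field_simp [(hu_pos t ht).ne']
    ring
  have hF'_cont : ContinuousOn F' (Ici 0) := by
    have hucont : ContinuousOn u (Ici 0) := fun t ht => (hu t ht).continuousAt.continuousWithinAt
    exact ((hf.comp_continuousOn hucont).sub (continuousOn_const.mul hucont)).neg.div hucont
      fun t ht => (hu_pos t ht).ne'
  have hF'_decay : F' =O[atTop] fun t => exp (-(a / 2) * t) := by
    have hrem : (fun t => f (u t) - a * u t) =O[atTop] fun t => u t ^ 2 :=
      hquad.comp_tendsto (flow_tendsto_zero hf hf_pos hu hu_pos)
    obtain ⟨c, hc⟩ := hrem.bound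
    refine (IsBigO.of_bound c ?_).trans (flow_isBigO_exp hf hf_pos ha hquad hu hu_pos)
    filter_upwards [hc, eventually_ge_atTop 0] with t hct ht
    have hut := hu_pos t ht
    rw [norm_pow, norm_of_nonneg hut.le] at hct
    rw [norm_div, norm_neg, norm_of_nonneg hut.le, div_le_iff₀ hut]
    linarith
  have hconv := tendsto_limUnder_of_hasDerivAt_of_integrableOn_Ioi (fun t ht => hF t (le_of_lt ht))
    (integrable_of_isBigO_exp_neg (half_pos ha) hF'_cont hF'_decay)
  refine ⟨_, exp_pos _, ((continuous_exp.tendsto _).comp hconv).congr' ?_⟩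
  filter_upwards [eventually_ge_atTop 0] with t ht
  simp [exp_add, exp_log (hu_pos t ht)]

end Flow

theorem exists_tendsto_abs_flow_mul_exp {f u : ℝ → ℝ} (hf : ContDiff ℝ 2 f)
    (hzero : ∀ x, f x = 0 ↔ x = 0) (ha : 0 < deriv f 0) (hu : ∀ t ≥ 0, HasDerivAt u (-f (u t)) t)
    (hu0 : u 0 ≠ 0) :
    AntitoneOn (fun t => |u t|) (Ici 0) ∧
      ∃ ρ > 0, Tendsto (fun t => |u t| * exp (deriv f 0 * t)) atTop (𝓝 ρ) := by
  have hquad : (fun x => f x - deriv f 0 * x) =O[𝓝 0] fun x => x ^ 2 := by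
    simpa [(hzero 0).2 rfl] using hf.isBigO_sub_sub_deriv_mul 0
  have hsign : ∀ x ≠ 0, 0 < x * f x := fun x =>
    mul_apply_pos_of_ne_zero hf.continuous (fun x => (hzero x).1)
      (eventually_pos_mul_of_isLittleO ha (hquad.trans_isLittleO (isLittleO_pow_id one_lt_two)))
  obtain ⟨σ, hσ, hσu⟩ : ∃ σ : ℝ, (σ = 1 ∨ σ = -1) ∧ 0 < σ * u 0 := by
    rcases hu0.lt_or_gt with h | h
    · exact ⟨-1, Or.inr rfl, by linarith⟩
    · exact ⟨1, Or.inl rfl, by linarith⟩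
  have hσσ : σ * σ = 1 := by rcases hσ with rfl | rfl <;> norm_num
  set g : ℝ → ℝ := fun x => σ * f (σ * x) with hg
  set v : ℝ → ℝ := fun t => σ * u t with hv
  have hg_smooth : ContDiff ℝ 2 g := contDiff_const.mul (hf.comp (contDiff_const.mul contDiff_id))
  have hv_flow : ∀ t ≥ 0, HasDerivAt v (-g (v t)) t := fun t ht => by
    refine ((hu t ht).const_mul σ).congr_deriv ?_
    simp only [hg, hv, ← mul_assoc, hσσ, one_mul, mul_neg]
  have hg_pos : ∀ x > 0, 0 < g x := fun x hx =>
    pos_of_mul_pos_right (by simpa [hg, ← mul_assoc, mul_comm x σ] using hsign (σ * x) (by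
      rcases hσ with rfl | rfl <;> simp [hx.ne'])) hx.le
  have hv_pos := flow_pos (hg_smooth.of_le (by norm_num)) (by simp [hg, (hzero 0).2 rfl]) hv_flow hσu
  have habs : EqOn v (fun t => |u t|) (Ici 0) := fun t ht => by
    have := hv_pos t ht
    rcases hσ with rfl | rfl
    · simp only [hv, one_mul] at this ⊢
      exact (abs_of_pos this).symm
    · simp only [hv, neg_one_mul] at this ⊢
      exact (abs_of_neg (neg_pos.1 this)).symm
  refine ⟨(flow_antitoneOn hg_pos hv_flow hv_pos).congr habs, ?_⟩
  obtain ⟨ρ, hρ, hlim⟩ := flow_mul_exp_tendsto hg_smooth.continuous hg_pos ha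
    (isBigO_reflect_sub_mul hσσ hquad) hv_flow hv_pos
  refine ⟨ρ, hρ, hlim.congr' ?_⟩
  filter_upwards [eventually_ge_atTop 0] with t ht
  rw [habs ht]

theorem AntitoneOn.ciSup_uIcc_eq {g : ℝ → ℝ} {p q : ℝ} (hg : AntitoneOn g (uIcc p q)) :
    ⨆ t : uIcc p q, g t = g (min p q) := by
  have hmin : min p q ∈ uIcc p q := ⟨le_rfl, min_le_max⟩
  have hle : ∀ t : uIcc p q, g t ≤ g (min p q) := fun t => hg hmin t.2 t.2.1
  have : Nonempty (uIcc p q) := ⟨⟨_, hmin⟩⟩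
  exact le_antisymm (ciSup_le hle) (le_ciSup_of_le ⟨_, forall_mem_range.2 hle⟩ ⟨_, hmin⟩ le_rfl)

/-- The paper's `t_ε(b)`, with `a` standing for `V''(0)`. -/
noncomputable def cutoffTime (a b ε : ℝ) : ℝ :=
  1 / (2 * a) * (log (1 / ε) + log (2 * a)) + b / a

theorem tendsto_cutoffTime {a : ℝ} (ha : 0 < a) (b : ℝ) :
    Tendsto (cutoffTime a b) (𝓝[>] 0) atTop := by
  have hlog : Tendsto (fun ε : ℝ => log (1 / ε)) (𝓝[>] 0) atTop := by
    simpa only [one_div, Function.comp_def] using tendsto_log_atTop.comp tendsto_inv_nhdsGT_zero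
  exact ((hlog.atTop_add tendsto_const_nhds).const_mul_atTop (by positivity)).atTop_add
    tendsto_const_nhds

theorem exp_neg_mul_cutoffTime {a : ℝ} (ha : 0 < a) (b : ℝ) {ε : ℝ} (hε : 0 < ε) :
    exp (-(a * cutoffTime a b ε)) = √ε * (exp (-b) / √(2 * a)) := by
  have hsqrt : ∀ x : ℝ, 0 < x → √x = exp (log x / 2) := fun x hx => by
    rw [sqrt_eq_rpow, rpow_def_of_pos hx]
    ring_nf
  rw [hsqrt ε hε, hsqrt (2 * a) (by positivity), ← exp_sub, ← exp_add, cutoffTime]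
  simp only [one_div, log_inv]
  congr 1
  field_simp
  ring

theorem tendsto_iSup_uIcc_cutoffTime_div_sqrt {u : ℝ → ℝ} {a ρ₀ γ : ℝ} (ha : 0 < a) (hγ : 0 < γ)
    (hanti : AntitoneOn u (Ici 0)) (hlim : Tendsto (fun t => u t * exp (a * t)) atTop (𝓝 ρ₀))
    (b : ℝ) :
    Tendsto (fun ε => (⨆ t : uIcc (cutoffTime a b ε) (cutoffTime a b ε + b * ε ^ γ), u t) / √ε)
      (𝓝[>] 0) (𝓝 (ρ₀ * (exp (-b) / √(2 * a)))) := by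
  set τ := cutoffTime a b
  set m : ℝ → ℝ := fun ε => min 0 (b * ε ^ γ) with hm
  have hm0 : Tendsto m (𝓝[>] 0) (𝓝 0) := by
    have hpow : Tendsto (fun ε : ℝ => ε ^ γ) (𝓝[>] 0) (𝓝 0) := by
      simpa [zero_rpow hγ.ne'] using
        ((continuous_rpow_const hγ.le).tendsto 0).mono_left nhdsWithin_le_nhds
    simpa [hm] using (tendsto_const_nhds (x := (0 : ℝ))).min (hpow.const_mul b)
  have hleft : Tendsto (fun ε => τ ε + m ε) (𝓝[>] 0) atTop :=
    (tendsto_cutoffTime ha b).atTop_add hm0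
  have hprod := (hlim.comp hleft).mul
    ((tendsto_const_nhds (x := exp (-b) / √(2 * a))).mul
      ((continuous_exp.tendsto _).comp (hm0.const_mul a).neg))
  simp only [mul_zero, neg_zero, exp_zero, mul_one] at hprod
  refine hprod.congr' ?_
  filter_upwards [self_mem_nhdsWithin, hleft.eventually_ge_atTop 0] with ε (hε : 0 < ε) hpos
  have hmin : min (τ ε) (τ ε + b * ε ^ γ) = τ ε + m ε := by
    simpa [hm] using min_add_add_left (τ ε) 0 (b * ε ^ γ)
  rw [(hanti.mono fun t ht => (hmin ▸ hpos).trans ht.1).ciSup_uIcc_eq, hmin,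
    eq_div_iff (sqrt_pos.2 hε).ne', Function.comp_apply, Function.comp_apply]
  have hcancel : exp (a * (τ ε + m ε)) * exp (-(a * m ε)) * (√ε * (exp (-b) / √(2 * a))) = 1 := by
    rw [← exp_neg_mul_cutoffTime ha b hε, ← exp_add, ← exp_add, ← exp_zero]
    congr 1
    simp only [τ]
    ring
  linear_combination u (τ ε + m ε) * hcancel

theorem sup_flow_near_cutoff_time_tendsto_general
    (V ψ : ℝ → ℝ) (x₀ γ : ℝ)
    (hV : ContDiff ℝ 3 V)
    (hcrit : ∀ x : ℝ, deriv V x = 0 ↔ x = 0)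
    (hV''0 : 0 < deriv (deriv V) 0)
    (hx₀ : x₀ ≠ 0)
    (hψ0 : ψ 0 = x₀)
    (hψ : ∀ t : ℝ, 0 ≤ t → HasDerivAt ψ (-(deriv V (ψ t))) t)
    (hγ0 : 0 < γ) :
    ∀ b : ℝ, ∃ ρ : ℝ, 0 < ρ ∧
      Tendsto
        (fun ε : ℝ =>
          (⨆ t : (Set.uIcc
              ((1 / (2 * deriv (deriv V) 0)) *
                  (Real.log (1 / ε) + Real.log (2 * deriv (deriv V) 0)) +
                b / deriv (deriv V) 0)
              ((1 / (2 * deriv (deriv V) 0)) *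
                  (Real.log (1 / ε) + Real.log (2 * deriv (deriv V) 0)) +
                b / deriv (deriv V) 0 + b * ε ^ γ) : Set ℝ),
            |ψ t|) / Real.sqrt ε)
        (nhdsWithin 0 (Set.Ioi 0)) (nhds ρ) := by
  intro b
  obtain ⟨hanti, ρ₀, hρ₀, hlim⟩ :=
    exists_tendsto_abs_flow_mul_exp (hV.deriv' (n := 2)) hcrit hV''0 hψ (hψ0 ▸ hx₀)
  have hρ : 0 < ρ₀ * (exp (-b) / √(2 * deriv (deriv V) 0)) := by
    have := sqrt_pos.2 (mul_pos two_pos hV''0)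
    positivity
  exact ⟨_, hρ, tendsto_iSup_uIcc_cutoffTime_div_sqrt hV''0 hγ0 hanti hlim b⟩

/-- For a regular potential `V` and its gradient flow `ψ` started at
`x₀ ≠ 0`, with `γ ∈ (0,1)`, `δ_ε = ε^γ`, cut-off time
`t_ε = (1/(2V''(0)))(ln(1/ε) + ln(2V''(0)))`, `t_ε(b) = t_ε + b/V''(0)` and
`t*_ε(b) = t_ε(b) + b δ_ε`, for every `b ∈ ℝ` the quantity
`(sup_{t between t_ε(b) and t*_ε(b)} |ψ_t|)/√ε` converges as `ε → 0⁺` to some finite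
strictly positive limit `ρ(b)`. -/
theorem sup_flow_near_cutoff_time_tendsto
    (V ψ : ℝ → ℝ) (x₀ γ : ℝ)
    (hV : ContDiff ℝ 3 V)
    (hV0 : V 0 = 0)
    (hcrit : ∀ x : ℝ, deriv V x = 0 ↔ x = 0)
    (hV''0 : 0 < deriv (deriv V) 0)
    (hcoercive : Tendsto V (Filter.cocompact ℝ) atTop)
    (hx₀ : x₀ ≠ 0)
    (hψ0 : ψ 0 = x₀)
    (hψ : ∀ t : ℝ, 0 ≤ t → HasDerivAt ψ (-(deriv V (ψ t))) t)
    (hγ0 : 0 < γ) (hγ1 : γ < 1) :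
    ∀ b : ℝ, ∃ ρ : ℝ, 0 < ρ ∧
      Tendsto
        (fun ε : ℝ =>
          (⨆ t : (Set.uIcc
              ((1 / (2 * deriv (deriv V) 0)) *
                  (Real.log (1 / ε) + Real.log (2 * deriv (deriv V) 0)) +
                b / deriv (deriv V) 0)
              ((1 / (2 * deriv (deriv V) 0)) *
                  (Real.log (1 / ε) + Real.log (2 * deriv (deriv V) 0)) +
                b / deriv (deriv V) 0 + b * ε ^ γ) : Set ℝ),
            |ψ t|) / Real.sqrt ε)
        (nhdsWithin 0 (Set.Ioi 0)) (nhds ρ) :=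
  sup_flow_near_cutoff_time_tendsto_general V ψ x₀ γ hV hcrit hV''0 hx₀ hψ0 hψ hγ0
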